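/- Let α ∈ (0,1) and let u, v ∈ ℂ with |u| ≥ |v| ≥ 0 and |u| > 0. Then |f(u) - f(v)| ≤ (|ln|u|| + 1)·(2|u|)^{1-α}·|u-v|^α, where f(z) = z·ln|z| with f(0)=0. -/

import Mathlib

noncomputable def f (z : ℂ) : ℂ := z * Real.log (‖z‖)

/-!
Write `f u - f v = (u - v) log ‖u‖ + v (log ‖u‖ - log ‖v‖)`. The first term is at most
`|log ‖u‖| ‖u - v‖`, and since `b log (a / b) ≤ a - b` the second is at most
`‖u‖ - ‖v‖ ≤ ‖u - v‖`. This Lipschitz-type bound becomes Hölder-type by interpolating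
`‖u - v‖ ≤ (2 ‖u‖) ^ (1 - α) ‖u - v‖ ^ α`, valid because `‖u - v‖ ≤ ‖u‖ + ‖v‖ ≤ 2 ‖u‖`.
-/

open Real

lemma mul_abs_log_sub_log_le_sub {a b : ℝ} (hb : 0 ≤ b) (hba : b ≤ a) :
    b * |log a - log b| ≤ a - b := by
  rcases hb.eq_or_lt with rfl | hb
  · simpa using hba
  have ha : 0 < a := hb.trans_le hba
  calc b * |log a - log b| = b * log (a / b) := by
        rw [abs_of_nonneg (sub_nonneg.2 (log_le_log hb hba)), log_div ha.ne' hb.ne']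
    _ ≤ b * (a / b - 1) := by gcongr; exact log_le_sub_one_of_pos (by positivity)
    _ = a - b := by field_simp

lemma le_rpow_one_sub_mul_rpow {d D α : ℝ} (hd : 0 ≤ d) (hdD : d ≤ D) (hα : α ≤ 1) :
    d ≤ D ^ (1 - α) * d ^ α := by
  calc d = d ^ (1 - α) * d ^ α := by rw [← rpow_add' hd (by norm_num), sub_add_cancel, rpow_one]
    _ ≤ D ^ (1 - α) * d ^ α := by gcongr

lemma norm_f_sub_f_le {u v : ℂ} (huv : ‖v‖ ≤ ‖u‖) :
    ‖f u - f v‖ ≤ (|log ‖u‖| + 1) * ‖u - v‖ := by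
  have hdecomp : f u - f v = (u - v) * log ‖u‖ + v * ((log ‖u‖ - log ‖v‖ : ℝ) : ℂ) := by
    simp only [f]; push_cast; ring
  calc ‖f u - f v‖
      ≤ ‖u - v‖ * |log ‖u‖| + ‖v‖ * |log ‖u‖ - log ‖v‖| := by
        rw [hdecomp]
        refine (norm_add_le _ _).trans_eq ?_
        rw [norm_mul, norm_mul, Complex.norm_real, Complex.norm_real, Real.norm_eq_abs,
          Real.norm_eq_abs]
    _ ≤ ‖u - v‖ * |log ‖u‖| + (‖u‖ - ‖v‖) := by
        gcongr; exact mul_abs_log_sub_log_le_sub (norm_nonneg v) huv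
    _ ≤ ‖u - v‖ * |log ‖u‖| + ‖u - v‖ := by gcongr; exact norm_sub_norm_le u v
    _ = (|log ‖u‖| + 1) * ‖u - v‖ := by ring

theorem stmt_14_general (α : ℝ) (hα : α ∈ Set.Ioo (0:ℝ) 1) (u v : ℂ)
    (huv : ‖v‖ ≤ ‖u‖) :
    ‖f u - f v‖ ≤
      (|Real.log (‖u‖)| + 1) * (2 * ‖u‖) ^ (1 - α) *
        ‖u - v‖ ^ α := by
  have hdist : ‖u - v‖ ≤ 2 * ‖u‖ := by linarith [norm_sub_le u v]
  calc ‖f u - f v‖ ≤ (|log ‖u‖| + 1) * ‖u - v‖ := norm_f_sub_f_le huv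
    _ ≤ (|log ‖u‖| + 1) * ((2 * ‖u‖) ^ (1 - α) * ‖u - v‖ ^ α) := by
      gcongr; exact le_rpow_one_sub_mul_rpow (norm_nonneg _) hdist hα.2.le
    _ = _ := by ring

theorem stmt_14 (α : ℝ) (hα : α ∈ Set.Ioo (0:ℝ) 1) (u v : ℂ)
    (huv : ‖v‖ ≤ ‖u‖) (hu : 0 < ‖u‖) :
    ‖f u - f v‖ ≤
      (|Real.log (‖u‖)| + 1) * (2 * ‖u‖) ^ (1 - α) *
        ‖u - v‖ ^ α :=
  stmt_14_general α hα u v huv
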